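/- The sets of permutations S_n(1-32, 31-2) and S_n(1-32, 3-12) are equal for every n. -/
import Mathlib


def contains132 {n : ℕ} (π : Equiv.Perm (Fin n)) : Prop :=
  ∃ i j : ℕ, ∃ (_ : i < j) (hj : j + 1 < n),
    π ⟨i, by omega⟩ < π ⟨j + 1, hj⟩ ∧ π ⟨j + 1, hj⟩ < π ⟨j, by omega⟩

def contains31_2 {n : ℕ} (π : Equiv.Perm (Fin n)) : Prop :=
  ∃ i j : ℕ, ∃ (_ : i + 1 < j) (hj : j < n),
    π ⟨i + 1, by omega⟩ < π ⟨j, hj⟩ ∧ π ⟨j, hj⟩ < π ⟨i, by omega⟩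

def contains312 {n : ℕ} (π : Equiv.Perm (Fin n)) : Prop :=
  ∃ i j : ℕ, ∃ (_ : i < j) (hj : j + 1 < n),
    π ⟨j, by omega⟩ < π ⟨j + 1, hj⟩ ∧ π ⟨j + 1, hj⟩ < π ⟨i, by omega⟩

lemma lemA {n : ℕ} (π : Equiv.Perm (Fin n)) (h : contains312 π) : contains31_2 π := by
  obtain ⟨i, j, hij, hj, h1, h2⟩ := h
  suffices H : ∀ d i (hd : i + d = j), π ⟨j + 1, hj⟩ < π ⟨i, by omega⟩ → contains31_2 π from
    H (j - i) i (by omega) h2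
  intro d
  induction d with
  | zero =>
    intro i hd hlt
    have hi : i = j := by omega
    subst hi
    exact absurd hlt (not_lt.2 (le_of_lt h1))
  | succ d ih =>
    intro i hd hlt
    rcases lt_trichotomy (π ⟨i + 1, by omega⟩) (π ⟨j + 1, hj⟩) with h | h | h
    · exact ⟨i, j + 1, by omega, hj, h, hlt⟩
    · have := π.injective h
      simp only [Fin.mk.injEq] at this
      omega
    · exact ih (i + 1) (by omega) h

lemma lemB {n : ℕ} (π : Equiv.Perm (Fin n)) (h132 : ¬ contains132 π)
    (h : contains31_2 π) : contains312 π := by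
  obtain ⟨i, j, hij, hj, h1, h2⟩ := h
  obtain ⟨k, rfl⟩ : ∃ k, j = k + 1 := ⟨j - 1, by omega⟩
  rcases lt_trichotomy (π ⟨k, by omega⟩) (π ⟨k + 1, hj⟩) with h | h | h
  · exact ⟨i, k, by omega, hj, h, h2⟩
  · have := π.injective h
    simp only [Fin.mk.injEq] at this
    omega
  · rcases eq_or_lt_of_le (show i + 1 ≤ k by omega) with hk | hk
    · subst hk
      exact absurd h1 (not_lt.2 (le_of_lt h))
    · exact absurd ⟨i + 1, k, hk, hj, h1, h⟩ h132

theorem stmt19 (n : ℕ) (π : Equiv.Perm (Fin n)) :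
    (¬ contains132 π ∧ ¬ contains31_2 π) ↔ (¬ contains132 π ∧ ¬ contains312 π) := by
  constructor
  · rintro ⟨ha, hb⟩
    exact ⟨ha, fun hc => hb (lemA π hc)⟩
  · rintro ⟨ha, hb⟩
    exact ⟨ha, fun hc => hb (lemB π ha hc)⟩
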